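/- Fix λ ∈ ℝ. For g = (x,y,θ) ∈ ℝ² × ℝ define (𝔛^λ(g) ψ)(α) = exp(i λ (x cos α − y sin α)) · ψ(α + θ), and let Π = (0, 0, π). With the SE(2) group law (x₁,y₁,θ₁)·(x₂,y₂,θ₂) = (x₁ + x₂ cos θ₁ − y₂ sin θ₁, y₁ + x₂ sin θ₁ + y₂ cos θ₁, θ₁ + θ₂), one has Π · g = (−x, −y, θ + π) and g · Π = (x, y, θ + π), and for every real-valued function ψ : ℝ → ℝ and every α ∈ ℝ, (𝔛^λ(Π · g) ψ)(α) = conj( (𝔛^λ(g · Π) ψ)(α) ). -/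
import Mathlib


/-- The representation operator `𝔛^λ(g)` of `SE(2)` on functions on the circle:
`(𝔛^λ(g) ψ)(α) = exp(i λ (x cos α − y sin α)) ψ(α + θ)` for `g = (x, y, θ)`. -/
noncomputable def Xrep (lam : ℝ) (g : ℝ × ℝ × ℝ) (ψ : ℝ → ℂ) : ℝ → ℂ :=
  fun α =>
    Complex.exp (Complex.I * lam * (g.1 * Real.cos α - g.2.1 * Real.sin α)) * ψ (α + g.2.2)

/-- The group law of `SE(2)` on coordinates `(x, y, θ)`. -/
noncomputable def se2Mul (g₁ g₂ : ℝ × ℝ × ℝ) : ℝ × ℝ × ℝ :=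
  (g₁.1 + g₂.1 * Real.cos g₁.2.2 - g₂.2.1 * Real.sin g₁.2.2,
   g₁.2.1 + g₂.1 * Real.sin g₁.2.2 + g₂.2.1 * Real.cos g₁.2.2,
   g₁.2.2 + g₂.2.2)

/-- With `Π = (0,0,π)`, one has `Π·g = (−x,−y,θ+π)`, `g·Π = (x,y,θ+π)`, and for
every real-valued `ψ`, `𝔛^λ(Π·g)ψ` is the complex conjugate of `𝔛^λ(g·Π)ψ`. -/
theorem Xrep_pi_conjugation (lam : ℝ) (x y θ : ℝ) :
    se2Mul (0, 0, Real.pi) (x, y, θ) = (-x, -y, θ + Real.pi) ∧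
    se2Mul (x, y, θ) (0, 0, Real.pi) = (x, y, θ + Real.pi) ∧
    (∀ (ψ : ℝ → ℝ) (α : ℝ),
      Xrep lam (se2Mul (0, 0, Real.pi) (x, y, θ)) (fun a => (ψ a : ℂ)) α =
        starRingEnd ℂ
          (Xrep lam (se2Mul (x, y, θ) (0, 0, Real.pi)) (fun a => (ψ a : ℂ)) α)) := by
  refine ⟨by simp [se2Mul, add_comm], by simp [se2Mul], ?_⟩
  intro ψ α
  simp only [Xrep, se2Mul, ← Complex.exp_conj, map_mul, Complex.conj_I, map_sub, Complex.conj_ofReal,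
    Real.sin_pi, Real.cos_pi]
  rw [show α + (Real.pi + θ) = α + (θ + Real.pi) by ring]
  congr 2
  push_cast
  ring
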